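/- Let n ≥ 1, let R be a finite type, let E ⊆ Fin n, and define the matrix M_E = ⊗_i M_i indexed by (Fin n → Fin 2 × Fin 2), where M_i = 1 − Φ⁺(Φ⁺)† for i ∈ E and M_i = Φ⁺(Φ⁺)† for i ∉ E. If a vector ψ : R × (Fin n → Fin 2 × Fin 2) → ℂ satisfies (1_R ⊗ M_E)·ψ = ψ, then its reduced matrix ψ_S on the S-components satisfies ψ_S ≤ 2^{−(n−|E|)} · ‖ψ‖² · 1, i.e., 2^{−(n−|E|)}‖ψ‖²·1 − ψ_S is positive semidefinite. -/

import Mathlib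

open Matrix ComplexOrder

/-- Rank-one matrix `v v†`. -/
noncomputable def outer {ι : Type} (v : ι → ℂ) : Matrix ι ι ℂ :=
  Matrix.vecMulVec v (star v)

/-- The EPR vector `Φ⁺` on `Fin 2 × Fin 2`. -/
noncomputable def EPR : Fin 2 × Fin 2 → ℂ :=
  fun p => if p.1 = p.2 then ((1 / Real.sqrt 2 : ℝ) : ℂ) else 0

/-- For `E ⊆ Fin n`, the tensor product matrix with `1 − Φ⁺(Φ⁺)†` on positions in
`E` and `Φ⁺(Φ⁺)†` outside. -/
noncomputable def matE (n : ℕ) (E : Finset (Fin n)) :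
    Matrix (Fin n → Fin 2 × Fin 2) (Fin n → Fin 2 × Fin 2) ℂ :=
  Matrix.of fun x y =>
    ∏ i, (if i ∈ E then (1 - outer EPR) else outer EPR) (x i) (y i)

/-- Reduced matrix on the `S`-components of a vector on `R × (Fin n → P × S)`. -/
noncomputable def redS {R P S : Type} [Fintype R] [Fintype P] {n : ℕ}
    (ψ : R × (Fin n → P × S) → ℂ) : Matrix (Fin n → S) (Fin n → S) ℂ :=
  Matrix.of fun s s' => ∑ ρ : R, ∑ p : Fin n → P,
    ψ (ρ, fun i => (p i, s i)) * (starRingEnd ℂ) (ψ (ρ, fun i => (p i, s' i)))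

/-! Let `Q` be the tensor product of the identity on the sites in `E` and of the projector
`Φ⁺(Φ⁺)†` on the other `k = n − |E|` sites. Since `Q M_E = M_E`, every vector fixed by `M_E`
is fixed by `Q`, i.e. is `Φ⁺` on each site outside `E`. Writing the `P`- and `S`-labels as
`(c, u)` and `(t, u')` with `c, t` the labels on `E`, such a vector vanishes unless `u = u'`
and is then a function `G c t` independent of `u`, so its squared norm is `2^k ‖G‖²`.
Contracting with `φ` on the `S`-labels and applying Cauchy–Schwarz in `t` bounds the result
by `‖φ‖² ‖G‖² = 2^{-k} ‖φ‖² ‖ψ‖²`. -/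

section PiKron

variable {ι α K : Type*} [Fintype ι] [DecidableEq ι] [Fintype α] [CommSemiring K]

def piKron (A : ι → Matrix α α K) : Matrix (ι → α) (ι → α) K :=
  of fun x y => ∏ i, A i (x i) (y i)

lemma piKron_mul_piKron (A B : ι → Matrix α α K) :
    piKron A * piKron B = piKron fun i => A i * B i := by
  ext x z
  simp only [piKron, mul_apply, of_apply, ← Finset.prod_mul_distrib]
  exact (Fintype.prod_sum fun i a => A i (x i) a * B i a (z i)).symm

end PiKron

lemma outer_mul_outer_of_unit {ι : Type} [Fintype ι] {v : ι → ℂ} (hv : star v ⬝ᵥ v = 1) :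
    outer v * outer v = outer v := by
  rw [outer, vecMulVec_mul_vecMulVec, hv, one_smul]

lemma inv_sqrt_two_mul_self : (Real.sqrt 2 : ℂ)⁻¹ * (Real.sqrt 2 : ℂ)⁻¹ = 1 / 2 := by
  rw [← mul_inv, ← Complex.ofReal_mul, Real.mul_self_sqrt zero_le_two]; norm_num

lemma star_EPR_dotProduct_EPR : star EPR ⬝ᵥ EPR = 1 := by
  simp [dotProduct, EPR, Fintype.sum_prod_type, inv_sqrt_two_mul_self]

lemma outer_EPR_apply (a b a' b' : Fin 2) :
    outer EPR (a, b) (a', b') = if a = b ∧ a' = b' then 1 / 2 else 0 := by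
  by_cases hab : a = b <;> by_cases hab' : a' = b' <;>
    simp [outer, vecMulVec_apply, EPR, hab, hab', inv_sqrt_two_mul_self]

section Projector

variable {n : ℕ} (E : Finset (Fin n))

noncomputable def eprProjOff : Matrix (Fin n → Fin 2 × Fin 2) (Fin n → Fin 2 × Fin 2) ℂ :=
  piKron fun i => if i ∈ E then 1 else outer EPR

lemma eprProjOff_mul_matE : eprProjOff E * matE n E = matE n E := by
  rw [eprProjOff, show matE n E = piKron _ from rfl, piKron_mul_piKron]
  congr 1
  funext i
  split_ifs
  · exact one_mul _
  · exact outer_mul_outer_of_unit star_EPR_dotProduct_EPR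

lemma eprProjOff_mulVec_of_matE_mulVec {w : (Fin n → Fin 2 × Fin 2) → ℂ}
    (hw : matE n E *ᵥ w = w) : eprProjOff E *ᵥ w = w := by
  rw [← hw, mulVec_mulVec, eprProjOff_mul_matE]

def siteSplit : (Fin n → Fin 2) ≃ ({i // i ∈ E} → Fin 2) × ({i // i ∉ E} → Fin 2) :=
  Equiv.piEquivPiSubtypeProd (· ∈ E) fun _ => Fin 2

def pairSplit : (({i // i ∈ E} → Fin 2) × ({i // i ∉ E} → Fin 2)) ×
    (({i // i ∈ E} → Fin 2) × ({i // i ∉ E} → Fin 2)) ≃ (Fin n → Fin 2 × Fin 2) :=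
  ((siteSplit E).prodCongr (siteSplit E)).symm.trans (Equiv.arrowProdEquivProdArrow _ _ _).symm

lemma card_subtype_notMem : Fintype.card {i // i ∉ E} = n - E.card := by
  simp [Fintype.card_subtype_compl]

lemma eprProjOff_pairSplit (c t c' t' : {i // i ∈ E} → Fin 2)
    (u u' v v' : {i // i ∉ E} → Fin 2) :
    eprProjOff E (pairSplit E ((c, u), (t, u'))) (pairSplit E ((c', v), (t', v'))) =
      if c = c' ∧ t = t' ∧ u = u' ∧ v = v' then ((2 : ℂ) ^ (n - E.card))⁻¹ else 0 := by
  set x := pairSplit E ((c, u), (t, u'))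
  set y := pairSplit E ((c', v), (t', v'))
  have hE (i : {i // i ∈ E}) : (if (i : Fin n) ∈ E then 1 else outer EPR) (x i) (y i) =
      if c i = c' i ∧ t i = t' i then 1 else 0 := by
    simp [x, y, pairSplit, siteSplit, i.2, one_apply]
  have hEc (i : {i // i ∉ E}) : (if (i : Fin n) ∈ E then 1 else outer EPR) (x i) (y i) =
      if u i = u' i ∧ v i = v' i then 1 / 2 else 0 := by
    simp [x, y, pairSplit, siteSplit, i.2, outer_EPR_apply]
  rw [eprProjOff, piKron, of_apply, ← Fintype.prod_subtype_mul_prod_subtype (· ∈ E)]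
  simp only [hE, hEc, Fintype.prod_boole, Fintype.prod_ite_zero, Finset.prod_const,
    Finset.card_univ, card_subtype_notMem]
  simp only [forall_and, ← funext_iff, ite_zero_mul_ite_zero, one_mul, one_div, inv_pow, and_assoc]

lemma eprProjOff_fixed_pairSplit {w : (Fin n → Fin 2 × Fin 2) → ℂ} (hw : eprProjOff E *ᵥ w = w)
    (c : {i // i ∈ E} → Fin 2) (u : {i // i ∉ E} → Fin 2) (t : {i // i ∈ E} → Fin 2)
    (u' : {i // i ∉ E} → Fin 2) :
    w (pairSplit E ((c, u), (t, u'))) = if u = u' then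
      ((2 : ℂ) ^ (n - E.card))⁻¹ * ∑ v, w (pairSplit E ((c, v), (t, v))) else 0 := by
  conv_lhs => rw [← hw, mulVec, dotProduct, ← (pairSplit E).sum_comp]
  simp [Fintype.sum_prod_type, eprProjOff_pairSplit, ite_and, Finset.mul_sum]

end Projector

lemma normSq_sum_mul_le {ι : Type*} [Fintype ι] (x y : ι → ℂ) :
    Complex.normSq (∑ i, x i * y i) ≤
      (∑ i, Complex.normSq (x i)) * ∑ i, Complex.normSq (y i) := by
  simp only [Complex.normSq_eq_norm_sq]
  calc ‖∑ i, x i * y i‖ ^ 2 ≤ (∑ i, ‖x i‖ * ‖y i‖) ^ 2 := by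
        gcongr
        exact (norm_sum_le _ _).trans_eq (by simp)
    _ ≤ _ := Finset.sum_mul_sq_le_sq_mul_sq _ _ _

lemma card_mul_sum_normSq_contract_le {C T U : Type*} [Fintype C] [Fintype T] [Fintype U]
    [DecidableEq U] (w : C × U → T × U → ℂ) (G : C → T → ℂ)
    (hw : ∀ c u t u', w (c, u) (t, u') = if u = u' then G c t else 0) (φ : T × U → ℂ) :
    Fintype.card U * ∑ p, Complex.normSq (∑ s, star (w p s) * φ s) ≤
      (∑ s, Complex.normSq (φ s)) * ∑ p, ∑ s, Complex.normSq (w p s) := by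
  have hcontract (c : C) (u : U) :
      ∑ s, star (w (c, u) s) * φ s = ∑ t, star (G c t) * φ (t, u) := by
    simp [Fintype.sum_prod_type, hw, apply_ite (starRingEnd ℂ), ite_mul]
  have hnorm : ∑ p, ∑ s, Complex.normSq (w p s) =
      Fintype.card U * ∑ c, ∑ t, Complex.normSq (G c t) := by
    simp [Fintype.sum_prod_type, hw, apply_ite Complex.normSq, Finset.mul_sum]
  have hCS : ∑ p, Complex.normSq (∑ s, star (w p s) * φ s) ≤
      (∑ s, Complex.normSq (φ s)) * ∑ c, ∑ t, Complex.normSq (G c t) := by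
    calc ∑ p, Complex.normSq (∑ s, star (w p s) * φ s)
        ≤ ∑ c, ∑ u, (∑ t, Complex.normSq (G c t)) * ∑ t, Complex.normSq (φ (t, u)) := by
          rw [Fintype.sum_prod_type]
          gcongr with c _ u
          rw [hcontract]
          simpa using normSq_sum_mul_le (fun t => star (G c t)) (fun t => φ (t, u))
      _ = (∑ c, ∑ t, Complex.normSq (G c t)) * ∑ u, ∑ t, Complex.normSq (φ (t, u)) :=
          Finset.sum_mul_sum ..|>.symm
      _ = _ := by rw [mul_comm, Fintype.sum_prod_type_right]
  rw [hnorm, mul_left_comm]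
  exact mul_le_mul_of_nonneg_left hCS (Nat.cast_nonneg _)

lemma sum_normSq_contract_le_of_matE_mulVec {n : ℕ} (E : Finset (Fin n))
    {w : (Fin n → Fin 2 × Fin 2) → ℂ} (hw : matE n E *ᵥ w = w) (φ : (Fin n → Fin 2) → ℂ) :
    ∑ p : Fin n → Fin 2, Complex.normSq (∑ s, star (w fun i => (p i, s i)) * φ s) ≤
      ((2 : ℝ) ^ (n - E.card))⁻¹ * (∑ s, Complex.normSq (φ s)) * ∑ x, Complex.normSq (w x) := by
  have hcore := card_mul_sum_normSq_contract_le (fun p s => w (pairSplit E (p, s))) _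
    (eprProjOff_fixed_pairSplit E (eprProjOff_mulVec_of_matE_mulVec E hw))
    (φ ∘ (siteSplit E).symm)
  rw [Fintype.card_fun, card_subtype_notMem, Fintype.card_fin] at hcore
  have hlhs : ∑ p : Fin n → Fin 2, Complex.normSq (∑ s, star (w fun i => (p i, s i)) * φ s) =
      ∑ p, Complex.normSq (∑ s, star (w (pairSplit E (p, s))) * (φ ∘ (siteSplit E).symm) s) := by
    rw [← (siteSplit E).symm.sum_comp]
    congr! 2 with p
    rw [← (siteSplit E).symm.sum_comp]
    rfl
  have hφ : ∑ s, Complex.normSq (φ s) = ∑ s, Complex.normSq ((φ ∘ (siteSplit E).symm) s) :=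
    ((siteSplit E).symm.sum_comp _).symm
  have hw2 : ∑ x, Complex.normSq (w x) = ∑ p, ∑ s, Complex.normSq (w (pairSplit E (p, s))) := by
    rw [← (pairSplit E).sum_comp, Fintype.sum_prod_type]
  rw [hlhs, hφ, hw2, mul_assoc, le_inv_mul_iff₀ (by positivity)]
  exact_mod_cast hcore

lemma star_dotProduct_self_eq_sum_normSq {ι : Type*} [Fintype ι] (v : ι → ℂ) :
    star v ⬝ᵥ v = ((∑ i, Complex.normSq (v i) : ℝ) : ℂ) := by
  simp [dotProduct, Complex.normSq_eq_conj_mul_self]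

lemma posSemidef_smul_one_sub_conjTranspose_mul_self {m k : Type*} [Fintype m] [Fintype k]
    [DecidableEq k] (B : Matrix m k ℂ) (c : ℝ)
    (h : ∀ φ, ∑ i, Complex.normSq ((B *ᵥ φ) i) ≤ c * ∑ s, Complex.normSq (φ s)) :
    (c • (1 : Matrix k k ℂ) - Bᴴ * B).PosSemidef := by
  refine .of_dotProduct_mulVec_nonneg
    ((isHermitian_one.smul (IsSelfAdjoint.all c)).sub (isHermitian_conjTranspose_mul_self B))
    fun φ => ?_
  rw [sub_mulVec, dotProduct_sub, smul_mulVec, one_mulVec, ← mulVec_mulVec, dotProduct_mulVec,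
    vecMul_conjTranspose, star_star, dotProduct_smul, star_dotProduct_self_eq_sum_normSq,
    star_dotProduct_self_eq_sum_normSq, Complex.real_smul, ← Complex.ofReal_mul,
    ← Complex.ofReal_sub, Complex.zero_le_real, sub_nonneg]
  exact h φ

noncomputable def redSFactor {R P S : Type} {n : ℕ} (ψ : R × (Fin n → P × S) → ℂ) :
    Matrix (R × (Fin n → P)) (Fin n → S) ℂ :=
  of fun q s => star (ψ (q.1, fun i => (q.2 i, s i)))

lemma redS_eq_conjTranspose_mul_self {R P S : Type} [Fintype R] [Fintype P] {n : ℕ}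
    (ψ : R × (Fin n → P × S) → ℂ) : redS ψ = (redSFactor ψ)ᴴ * redSFactor ψ := by
  ext s s'
  simp [redS, redSFactor, mul_apply, Fintype.sum_prod_type]

theorem stmt7_general (n : ℕ) (R : Type) [Fintype R] (E : Finset (Fin n))
    (ψ : R × (Fin n → Fin 2 × Fin 2) → ℂ)
    (hfix : ∀ (ρ : R) (x : Fin n → Fin 2 × Fin 2),
      ∑ y, matE n E x y * ψ (ρ, y) = ψ (ρ, x)) :
    ((((2 : ℝ) ^ (n - E.card : ℕ))⁻¹ * ∑ z, Complex.normSq (ψ z)) •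
        (1 : Matrix (Fin n → Fin 2) (Fin n → Fin 2) ℂ) - redS ψ).PosSemidef := by
  rw [redS_eq_conjTranspose_mul_self]
  refine posSemidef_smul_one_sub_conjTranspose_mul_self _ _ fun φ => ?_
  calc ∑ q, Complex.normSq ((redSFactor ψ *ᵥ φ) q)
      ≤ ∑ ρ, ((2 : ℝ) ^ (n - E.card))⁻¹ * (∑ s, Complex.normSq (φ s)) *
          ∑ x, Complex.normSq (ψ (ρ, x)) := by
        rw [Fintype.sum_prod_type]
        exact Finset.sum_le_sum fun ρ _ =>
          sum_normSq_contract_le_of_matE_mulVec E (funext (hfix ρ)) φ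
    _ = _ := by rw [← Finset.mul_sum, Fintype.sum_prod_type]; ring

/-- if `(1_R ⊗ M_E)ψ = ψ`, then the reduced matrix of `ψ` on the
`S`-components is bounded by `2^{−(n−|E|)}‖ψ‖²·1`. -/
theorem stmt7 (n : ℕ) (hn : 1 ≤ n) (R : Type) [Fintype R] (E : Finset (Fin n))
    (ψ : R × (Fin n → Fin 2 × Fin 2) → ℂ)
    (hfix : ∀ (ρ : R) (x : Fin n → Fin 2 × Fin 2),
      ∑ y, matE n E x y * ψ (ρ, y) = ψ (ρ, x)) :
    ((((2 : ℝ) ^ (n - E.card : ℕ))⁻¹ * ∑ z, Complex.normSq (ψ z)) •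
        (1 : Matrix (Fin n → Fin 2) (Fin n → Fin 2) ℂ) - redS ψ).PosSemidef :=
  stmt7_general n R E ψ hfix
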